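/- arXiv:1007.0310 — 10 statements merged into one kernel-verified Lean document; each statement's English description precedes it below -/
import Mathlib

section
/- Let R be a commutative ring, a ∈ R, and r ≥ q ≥ 1 integers. In the ring A = R[T_1,…,T_{r+1}]/(T_1⋯T_q − a), the module of Kähler differentials Ω^{r+1}_{A/R} (the (r+1)-st exterior power of Ω^1_{A/R}) is annihilated by a. -/
open MvPolynomial

/-!
Write `tᵢ` for the image of `Tᵢ` in `A`. The forms `dt₀, …, dt_r` span `Ω¹_{A/R}`, so
`⋀^{r+1} Ω¹_{A/R}` is spanned by the single element `dt₀ ∧ ⋯ ∧ dt_r`. Differentiating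
`t₀ ⋯ t_{q-1} = a` gives `∑ᵢ (∏_{j ≠ i} tⱼ) dtᵢ = 0`, so
`a dt₀ = t₀ (∏_{j ≠ 0} tⱼ) dt₀` lies in the span of `dt₁, …, dt_r`; hence
`a (dt₀ ∧ ⋯ ∧ dt_r)` is a combination of wedges with a repeated factor, i.e. zero.
-/

theorem Derivation.leibniz_prod {R A M : Type*} [CommSemiring R] [CommSemiring A] [Algebra R A]
    [AddCommMonoid M] [Module A M] [Module R M] (D : Derivation R A M)
    {ι : Type*} [DecidableEq ι] (s : Finset ι) (f : ι → A) :
    D (∏ i ∈ s, f i) = ∑ i ∈ s, (∏ j ∈ s.erase i, f j) • D (f i) := by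
  induction s using Finset.induction_on with
  | empty => simp
  | @insert a s ha ih =>
    rw [Finset.prod_insert ha, Derivation.leibniz, ih, Finset.smul_sum, Finset.sum_insert ha,
      Finset.erase_insert ha, add_comm]
    congr 1
    refine Finset.sum_congr rfl fun i hi => ?_
    have hia : a ≠ i := fun h => ha (h ▸ hi)
    rw [Finset.erase_insert_of_ne hia,
      Finset.prod_insert fun h => ha (Finset.mem_of_mem_erase h), mul_smul]

theorem Derivation.prod_smul_mem_span_of_map_prod_eq_zero {R A M : Type*} [CommSemiring R]
    [CommRing A] [Algebra R A] [AddCommGroup M] [Module A M] [Module R M]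
    (D : Derivation R A M) {ι : Type*} [DecidableEq ι] {s : Finset ι} (f : ι → A) {i : ι}
    (hi : i ∈ s) (h : D (∏ j ∈ s, f j) = 0) :
    (∏ j ∈ s, f j) • D (f i) ∈ Submodule.span A ((fun j => D (f j)) '' ↑(s.erase i)) := by
  rw [D.leibniz_prod, ← Finset.add_sum_erase s _ hi, add_eq_zero_iff_eq_neg] at h
  rw [← Finset.mul_prod_erase s f hi, mul_smul, h, smul_neg]
  refine Submodule.neg_mem _ (Submodule.smul_mem _ _ (Submodule.sum_mem _ fun j hj => ?_))
  exact Submodule.smul_mem _ _ (Submodule.subset_span ⟨j, hj, rfl⟩)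

theorem MvPolynomial.adjoin_range_comp_X_eq_top {σ R S : Type*} [CommSemiring R] [Semiring S]
    [Algebra R S] {f : MvPolynomial σ R →ₐ[R] S} (hf : Function.Surjective f) :
    Algebra.adjoin R (Set.range (f ∘ X)) = ⊤ := by
  rw [Set.range_comp, Algebra.adjoin_image, adjoin_range_X, Algebra.map_top,
    (AlgHom.range_eq_top f).mpr hf]

theorem KaehlerDifferential.span_D_image_eq_top_of_adjoin_eq_top {R S : Type*} [CommRing R]
    [CommRing S] [Algebra R S] {s : Set S} (hs : Algebra.adjoin R s = ⊤) :
    Submodule.span S (D R S '' s) = ⊤ := by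
  rw [eq_top_iff, ← span_range_derivation, Submodule.span_le]
  rintro _ ⟨x, rfl⟩
  induction (hs ▸ Algebra.mem_top : x ∈ Algebra.adjoin R s) using Algebra.adjoin_induction with
  | mem x hx => exact Submodule.subset_span ⟨x, hx, rfl⟩
  | algebraMap r => simp
  | add x y _ _ hx hy => exact (D R S).map_add x y ▸ add_mem hx hy
  | mul x y _ _ hx hy =>
    rw [Derivation.leibniz]
    exact add_mem (Submodule.smul_mem _ _ hy) (Submodule.smul_mem _ _ hx)

section

variable {A M : Type*} [CommRing A] [AddCommGroup M] [Module A M]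

theorem AlternatingMap.smul_apply_eq_zero_of_smul_mem_span {N ι : Type*} [AddCommGroup N]
    [Module A N] [DecidableEq ι]
    (f : M [⋀^ι]→ₗ[A] N) {v : ι → M} {i : ι} {c : A}
    (hc : c • v i ∈ Submodule.span A (v '' {i}ᶜ)) : c • f v = 0 := by
  rw [← Function.update_eq_self i v, ← f.map_update_smul]
  suffices Submodule.span A (v '' {i}ᶜ) ≤ LinearMap.ker (f.toMultilinearMap.toLinearMap v i) from
    this hc
  rw [Submodule.span_le]
  rintro _ ⟨j, hj, rfl⟩
  exact f.map_eq_zero_of_eq _ (i := i) (j := j)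
    (by rw [Function.update_self, Function.update_of_ne hj]) (Ne.symm hj)

namespace exteriorPower

theorem span_singleton_ιMulti_eq_top {n : ℕ} {v : Fin n → M}
    (hv : Submodule.span A (Set.range v) = ⊤) :
    Submodule.span A {ιMulti A n v} = ⊤ := by
  rw [eq_top_iff, ← ιMulti_span_of_span A n M hv, Submodule.span_le]
  rintro _ ⟨_, hα, rfl⟩
  obtain ⟨α, rfl⟩ := Set.range_subset_range_iff_exists_comp.mp hα
  by_cases hinj : Function.Injective α
  · let σ := Equiv.ofBijective α (Finite.injective_iff_bijective.mp hinj)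
    rw [show v ∘ α = v ∘ σ from rfl, AlternatingMap.map_perm]
    exact Submodule.smul_mem _ _ (Submodule.mem_span_singleton_self _)
  · rw [(ιMulti A n).map_eq_zero_of_not_injective _ fun h => hinj h.of_comp]
    exact Submodule.zero_mem _

theorem smul_eq_zero_of_smul_mem_span {n : ℕ} {v : Fin n → M}
    (hv : Submodule.span A (Set.range v) = ⊤) {i : Fin n} {c : A}
    (hc : c • v i ∈ Submodule.span A (v '' {i}ᶜ)) (ω : ⋀[A]^n M) : c • ω = 0 := by
  obtain ⟨b, rfl⟩ := Submodule.mem_span_singleton.mp (span_singleton_ιMulti_eq_top hv ▸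
    Submodule.mem_top : ω ∈ Submodule.span A {ιMulti A n v})
  rw [smul_comm, (ιMulti A n).smul_apply_eq_zero_of_smul_mem_span hc, smul_zero]

end exteriorPower

end

theorem exteriorPower_kaehlerDifferential_annihilated_general
    (R : Type*) [CommRing R] (a : R) (r q : ℕ) (hq : 1 ≤ q) :
    ∀ ω : ⋀[(MvPolynomial (Fin (r + 1)) R ⧸
        Ideal.span {(∏ i ∈ Finset.univ.filter (fun i : Fin (r + 1) => (i : ℕ) < q), X i)
          - C a})]^(r + 1)
      (Ω[(MvPolynomial (Fin (r + 1)) R ⧸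
        Ideal.span {(∏ i ∈ Finset.univ.filter (fun i : Fin (r + 1) => (i : ℕ) < q), X i)
          - C a})⁄R]),
    algebraMap R (MvPolynomial (Fin (r + 1)) R ⧸
        Ideal.span {(∏ i ∈ Finset.univ.filter (fun i : Fin (r + 1) => (i : ℕ) < q), X i)
          - C a}) a • ω = 0 := by
  set F := Finset.univ.filter fun i : Fin (r + 1) => (i : ℕ) < q
  set I : Ideal (MvPolynomial (Fin (r + 1)) R) := Ideal.span {(∏ i ∈ F, X i) - C a}
  intro ω
  let t (i : Fin (r + 1)) : _ ⧸ I := Ideal.Quotient.mkₐ R I (X i)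
  have h0 : (0 : Fin (r + 1)) ∈ F := by
    simp only [F, Finset.mem_filter, Finset.mem_univ, true_and, Fin.val_zero]
    omega
  have hprod : ∏ i ∈ F, t i = algebraMap R _ a := by
    rw [← map_prod, ← AlgHom.commutes (Ideal.Quotient.mkₐ R I), MvPolynomial.algebraMap_eq,
      Ideal.Quotient.mkₐ_eq_mk, Ideal.Quotient.mk_eq_mk_iff_sub_mem]
    exact Ideal.subset_span rfl
  have hspan : Submodule.span (_ ⧸ I) (Set.range (KaehlerDifferential.D R _ ∘ t)) = ⊤ := by
    rw [Set.range_comp]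
    exact KaehlerDifferential.span_D_image_eq_top_of_adjoin_eq_top
      (adjoin_range_comp_X_eq_top (Ideal.Quotient.mkₐ_surjective R I))
  refine exteriorPower.smul_eq_zero_of_smul_mem_span hspan (i := 0) ?_ ω
  rw [← hprod]
  refine Submodule.span_mono (Set.image_mono ?_)
    ((KaehlerDifferential.D R _).prod_smul_mem_span_of_map_prod_eq_zero t h0 ?_)
  · rw [Finset.coe_erase]
    exact Set.sdiff_subset_compl _ _
  · rw [hprod, Derivation.map_algebraMap]

/-- For `A = R[T₁,…,T_{r+1}]/(T₁⋯T_q − a)`, the module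
`Ω^{r+1}_{A/R}` (the `(r+1)`-st exterior power of the Kähler differentials)
is annihilated by `a`. -/
theorem exteriorPower_kaehlerDifferential_annihilated
    (R : Type*) [CommRing R] (a : R) (r q : ℕ) (hq : 1 ≤ q) (hqr : q ≤ r + 1) :
    ∀ ω : ⋀[(MvPolynomial (Fin (r + 1)) R ⧸
        Ideal.span {(∏ i ∈ Finset.univ.filter (fun i : Fin (r + 1) => (i : ℕ) < q), X i)
          - C a})]^(r + 1)
      (Ω[(MvPolynomial (Fin (r + 1)) R ⧸
        Ideal.span {(∏ i ∈ Finset.univ.filter (fun i : Fin (r + 1) => (i : ℕ) < q), X i)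
          - C a})⁄R]),
    algebraMap R (MvPolynomial (Fin (r + 1)) R ⧸
        Ideal.span {(∏ i ∈ Finset.univ.filter (fun i : Fin (r + 1) => (i : ℕ) < q), X i)
          - C a}) a • ω = 0 :=
  exteriorPower_kaehlerDifferential_annihilated_general R a r q hq
end

section
/- Let P be a finitely generated, integral, saturated, torsion-free commutative monoid with trivial unit group P^× = {e}. Then the dual group P^{gp*} = Hom(P^{gp}, ℤ) is generated as a group by the dual monoid P^* = {f ∈ P^{gp*} : f(x) ≥ 0 for all x ∈ P}. -/
/-!
Since `P` is generated by a finite set `S` and has no nonzero units, no nonnegative rational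
combination of the nonzero elements of `S` vanishes. By Gordan's theorem some functional, which
may be taken integral after clearing denominators, is strictly positive on them; call it `H`.
Then `H ∈ P^*`, and for every `f : P^gp → ℤ` also `f + N • H ∈ P^*` once `N` is large, so that
`f = (f + N • H) - N • H` lies in the group generated by `P^*`.
-/

open Filter

theorem Finset.eventually_forall_pos_add_mul {R ι : Type*} [Ring R] [LinearOrder R]
    [IsStrictOrderedRing R] [Archimedean R] (s : Finset ι) (a b : ι → R)
    (hb : ∀ i ∈ s, 0 < b i) : ∀ᶠ c in atTop, ∀ i ∈ s, 0 < a i + c * b i :=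
  (eventually_all_finset s).2 fun i hi =>
    (tendsto_atTop_add_const_left _ (a i)
      (tendsto_id.atTop_mul_const' (hb i hi))).eventually_gt_atTop 0

section Gordan

variable {𝕜 V : Type*} [Field 𝕜] [LinearOrder 𝕜] [IsStrictOrderedRing 𝕜]
  [AddCommGroup V] [Module 𝕜 V]

theorem zero_notMem_convexHull_image_sub_smulRight {s : Set V} {t : V} (θ : V →ₗ[𝕜] 𝕜)
    {φ : V →ₗ[𝕜] 𝕜} (hφ : ∀ x ∈ s, 0 < φ x) (hφt : φ t ≤ 0)
    (h0 : (0 : V) ∉ convexHull 𝕜 (insert t s)) :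
    (0 : V) ∉ convexHull 𝕜 ((LinearMap.id - θ.smulRight t : V →ₗ[𝕜] V) '' s) := by
  rw [← LinearMap.image_convexHull]
  rintro ⟨x, hx, hπx⟩
  have hφx : 0 < φ x := convexHull_min hφ (convex_halfSpace_gt φ.isLinear 0) hx
  set a := θ x
  have hxt : x = a • t := sub_eq_zero.mp (by simpa using hπx)
  have ha : a < 0 := by
    rw [hxt, map_smul, smul_eq_mul] at hφx
    exact neg_of_mul_pos_left hφx hφt
  have ha' : 0 < 1 - a := by linarith
  refine h0 ?_
  convert convex_convexHull 𝕜 (insert t s) (convexHull_mono (Set.subset_insert t s) hx)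
    (subset_convexHull 𝕜 _ (Set.mem_insert t s)) (inv_pos.2 ha').le
    (mul_nonneg (neg_nonneg.2 ha.le) (inv_pos.2 ha').le) (by field_simp; ring) using 1
  rw [hxt, smul_smul, ← add_smul, neg_mul, mul_comm, add_neg_cancel, zero_smul]

theorem exists_forall_pos_of_zero_notMem_convexHull [Archimedean 𝕜] (s : Finset V)
    (hs : (0 : V) ∉ convexHull 𝕜 (s : Set V)) : ∃ φ : V →ₗ[𝕜] 𝕜, ∀ x ∈ s, 0 < φ x := by
  classical
  induction hcard : s.card using Nat.strong_induction_on generalizing s with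
  | _ k ih =>
    obtain rfl | ⟨t, ht⟩ := s.eq_empty_or_nonempty
    · exact ⟨0, by simp⟩
    rw [← Finset.insert_erase ht] at hs ⊢
    set s' := s.erase t
    rw [Finset.coe_insert] at hs
    have hcard' : s'.card < k := hcard ▸ Finset.card_erase_lt_of_mem ht
    obtain ⟨φ, hφ⟩ := ih _ hcard' s'
      (fun h => hs (convexHull_mono (Set.subset_insert _ _) h)) rfl
    by_cases hφt : 0 < φ t
    · exact ⟨φ, Finset.forall_mem_insert _ _ _ |>.2 ⟨hφt, hφ⟩⟩
    have ht0 : t ≠ 0 := by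
      rintro rfl
      exact hs (subset_convexHull 𝕜 _ (Set.mem_insert 0 _))
    obtain ⟨θ, hθ⟩ := Module.Projective.exists_dual_eq_one 𝕜 ht0
    -- `π` kills `t`, so a functional positive on `π '' s'` vanishes at `t`; adding `θ` to a large
    -- multiple of it gives a functional positive on all of `insert t s'`.
    set π : V →ₗ[𝕜] V := LinearMap.id - θ.smulRight t
    obtain ⟨ψ, hψ⟩ := ih _ (Finset.card_image_le.trans_lt hcard') (s'.image π)
      (by simpa using zero_notMem_convexHull_image_sub_smulRight θ hφ (not_lt.1 hφt) hs) rfl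
    obtain ⟨c, hc⟩ := (s'.eventually_forall_pos_add_mul θ (ψ ∘ π)
      fun x hx => hψ _ (Finset.mem_image_of_mem _ hx)).exists
    refine ⟨θ + c • ψ ∘ₗ π, Finset.forall_mem_insert _ _ _ |>.2 ⟨?_, fun x hx => ?_⟩⟩
    · simp [π, hθ]
    · simpa using hc x hx

end Gordan

theorem Finset.exists_nat_mul_eq_intCast {α : Type*} (s : Finset α) (q : α → ℚ) :
    ∃ d : ℕ, 0 < d ∧ ∀ a ∈ s, ∃ m : ℤ, (m : ℚ) = d * q a := by
  classical
  refine ⟨∏ a ∈ s, (q a).den, Finset.prod_pos fun a _ => (q a).den_pos, fun a ha =>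
    ⟨(∏ b ∈ s.erase a, (q b).den : ℕ) * (q a).num, ?_⟩⟩
  rw [← Finset.prod_erase_mul _ _ ha]
  push_cast
  rw [mul_assoc, Rat.den_mul_eq_num]

theorem AddSubmonoid.eq_zero_of_sum_eq_zero {M ι : Type*} [AddCommGroup M] {P : AddSubmonoid M}
    (hP : ∀ x ∈ P, -x ∈ P → x = 0) {s : Finset ι} {x : ι → M} (hx : ∀ i ∈ s, x i ∈ P)
    (hsum : ∑ i ∈ s, x i = 0) {i : ι} (hi : i ∈ s) : x i = 0 := by
  classical
  refine hP _ (hx i hi) ?_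
  rw [← Finset.add_sum_erase s x hi, add_eq_zero_iff_neg_eq] at hsum
  exact hsum ▸ _root_.sum_mem fun j hj => hx j (Finset.mem_of_mem_erase hj)

theorem zero_notMem_convexHull_intCast_of_sharp {ι : Type*} {P : AddSubmonoid (ι → ℤ)}
    (hP : ∀ x ∈ P, -x ∈ P → x = 0) {S : Finset (ι → ℤ)} (hSP : ∀ x ∈ S, x ∈ P)
    (hS0 : (0 : ι → ℤ) ∉ S) :
    (0 : ι → ℚ) ∉ convexHull ℚ ((Int.castAddHom ℚ).compLeft ι '' S) := by
  classical
  set toℚ := (Int.castAddHom ℚ).compLeft ι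
  have htoℚ : Function.Injective toℚ := Int.cast_injective.comp_left
  rw [← Finset.coe_image, Finset.mem_convexHull']
  rintro ⟨w, hw0, hw1, hw⟩
  rw [Finset.sum_image htoℚ.injOn] at hw1 hw
  obtain ⟨d, hd, hm⟩ := S.exists_nat_mul_eq_intCast fun x => w (toℚ x)
  choose! m hm using hm
  have hm0 : ∀ x ∈ S, 0 ≤ m x := fun x hx => by
    have := mul_nonneg d.cast_nonneg (hw0 _ (Finset.mem_image_of_mem _ hx))
    rw [← hm x hx] at this
    exact_mod_cast this
  have hrel : ∑ x ∈ S, m x • x = 0 := htoℚ <| by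
    calc toℚ (∑ x ∈ S, m x • x) = ∑ x ∈ S, toℚ (m x • x) := map_sum _ _ _
      _ = ∑ x ∈ S, (m x : ℚ) • toℚ x :=
          Finset.sum_congr rfl fun x _ => by rw [map_zsmul, Int.cast_smul_eq_zsmul]
      _ = ∑ x ∈ S, (d : ℚ) • (w (toℚ x) • toℚ x) :=
          Finset.sum_congr rfl fun x hx => by rw [hm x hx, mul_smul]
      _ = toℚ 0 := by rw [← Finset.smul_sum, hw, smul_zero, map_zero]
  obtain ⟨x₀, hx₀, hwx₀⟩ := Finset.exists_ne_zero_of_sum_ne_zero (hw1 ▸ one_ne_zero)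
  have hmx₀ : m x₀ ≠ 0 := by
    intro h
    have := hm x₀ hx₀
    simp [h, hd.ne', hwx₀] at this
  have hmP : ∀ x ∈ S, m x • x ∈ P := fun x hx => by
    rw [← Int.toNat_of_nonneg (hm0 x hx), natCast_zsmul]
    exact nsmul_mem (hSP x hx) _
  have := AddSubmonoid.eq_zero_of_sum_eq_zero hP hmP hrel hx₀
  exact hS0 ((smul_eq_zero.mp this).resolve_left hmx₀ ▸ hx₀)

theorem LinearMap.exists_addMonoidHom_intCast_eq_nat_mul {ι : Type*} [Fintype ι]
    (φ : (ι → ℚ) →ₗ[ℚ] ℚ) : ∃ d : ℕ, 0 < d ∧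
      ∃ H : (ι → ℤ) →+ ℤ, ∀ x, (H x : ℚ) = d * φ ((Int.castAddHom ℚ).compLeft ι x) := by
  classical
  obtain ⟨d, hd, hm⟩ := Finset.univ.exists_nat_mul_eq_intCast
    fun i => φ fun j => if i = j then 1 else 0
  choose m hm using hm
  refine ⟨d, hd, ∑ i, m i (Finset.mem_univ i) • Pi.evalAddMonoidHom (fun _ => ℤ) i, fun x => ?_⟩
  rw [φ.pi_apply_eq_sum_univ, Finset.mul_sum]
  simp only [AddMonoidHom.finsetSum_apply, AddMonoidHom.smul_apply, Pi.evalAddMonoidHom_apply,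
    Int.cast_sum, Int.cast_mul, hm, AddMonoidHom.compLeft_apply,
    Int.coe_castAddHom, Function.comp_apply, smul_eq_mul]
  exact Finset.sum_congr rfl fun i _ => by ring

theorem exists_addMonoidHom_pos_of_sharp {ι : Type*} [Fintype ι] {P : AddSubmonoid (ι → ℤ)}
    (hP : ∀ x ∈ P, -x ∈ P → x = 0) {S : Finset (ι → ℤ)} (hSP : ∀ x ∈ S, x ∈ P)
    (hS0 : (0 : ι → ℤ) ∉ S) : ∃ H : (ι → ℤ) →+ ℤ, ∀ x ∈ S, 0 < H x := by
  classical
  obtain ⟨φ, hφ⟩ := exists_forall_pos_of_zero_notMem_convexHull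
    (S.image ((Int.castAddHom ℚ).compLeft ι))
    (by simpa using zero_notMem_convexHull_intCast_of_sharp hP hSP hS0)
  obtain ⟨d, hd, H, hH⟩ := φ.exists_addMonoidHom_intCast_eq_nat_mul
  refine ⟨H, fun x hx => ?_⟩
  have : (0 : ℚ) < H x := by
    rw [hH]
    exact mul_pos (Nat.cast_pos.2 hd) (hφ _ (Finset.mem_image_of_mem _ hx))
  exact_mod_cast this

theorem dual_group_generated_by_dual_monoid_general
    (n : ℕ) (P : AddSubmonoid (Fin n → ℤ))
    (hfg : P.FG)
    (hunits : ∀ x ∈ P, -x ∈ P → x = 0) :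
    AddSubgroup.closure
      {f : (Fin n → ℤ) →+ ℤ | ∀ x ∈ P, 0 ≤ f x} = ⊤ := by
  classical
  obtain ⟨S, rfl⟩ := hfg
  obtain ⟨H, hH⟩ := exists_addMonoidHom_pos_of_sharp hunits
    (fun x hx => AddSubmonoid.subset_closure (Finset.mem_of_mem_erase hx)) (S.notMem_erase 0)
  set D := {f : (Fin n → ℤ) →+ ℤ | ∀ x ∈ AddSubmonoid.closure (S : Set (Fin n → ℤ)), 0 ≤ f x}
  have mem_dual : ∀ g : (Fin n → ℤ) →+ ℤ, (∀ x ∈ S.erase 0, 0 < g x) → g ∈ D :=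
    fun g hg x hx => by
      induction hx using AddSubmonoid.closure_induction with
      | mem x hx =>
        obtain rfl | hx0 := eq_or_ne x 0
        · simp
        · exact (hg x (Finset.mem_erase.2 ⟨hx0, hx⟩)).le
      | zero => simp
      | add x y _ _ hx hy => simpa using add_nonneg hx hy
  refine eq_top_iff.2 fun f _ => ?_
  obtain ⟨N, hN⟩ := ((S.erase 0).eventually_forall_pos_add_mul f H hH).exists
  rw [show f = (f + N • H) - N • H by abel]
  exact sub_mem (AddSubgroup.subset_closure (mem_dual _ (by simpa using hN)))
    (zsmul_mem (AddSubgroup.subset_closure (mem_dual H hH)) N)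

/-- Let `P` be a finitely generated, integral, saturated, torsion-free
commutative monoid with trivial units, realized as an additive submonoid of its
group completion `G ≅ ℤⁿ` which it generates.  Then the dual group
`Hom(G, ℤ)` is generated, as a group, by the dual monoid
`P^* = {f : ∀ x ∈ P, 0 ≤ f x}`. -/
theorem dual_group_generated_by_dual_monoid
    (n : ℕ) (P : AddSubmonoid (Fin n → ℤ))
    (hfg : P.FG)
    (hgen : AddSubgroup.closure (P : Set (Fin n → ℤ)) = ⊤)
    (hsat : ∀ (x : Fin n → ℤ) (k : ℕ), 1 ≤ k → k • x ∈ P → x ∈ P)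
    (hunits : ∀ x ∈ P, -x ∈ P → x = 0) :
    AddSubgroup.closure
      {f : (Fin n → ℤ) →+ ℤ | ∀ x ∈ P, 0 ≤ f x} = ⊤ :=
  dual_group_generated_by_dual_monoid_general n P hfg hunits
end

section
/- Let I be a finite set and N = {(a, b) ∈ ℕ^I × ℕ^I : ∑_i a_i = ∑_i b_i}. Identify (i, j) ∈ I × I with (e_i, e_j) ∈ N where (e_i) is the standard basis. Fix a total order on I and give I × I the product order. Then for every (a, b) ∈ N there exists a totally ordered subset σ ⊆ I × I such that (a, b) lies in the submonoid N_σ of N generated by {(e_i, e_j) : (i, j) ∈ σ}. -/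
/-!
Peel generators off greedily: if `i` is the least index with `aᵢ ≠ 0` and `j` the least with
`bⱼ ≠ 0`, then `(a, b) = (e_i, e_j) + (a', b')`, and every generator `(e_k, e_l)` used for
`(a', b')` has `aₖ ≠ 0` and `bₗ ≠ 0`, hence `(i, j) ≤ (k, l)`. So inserting `(i, j)` into a chain
for `(a', b')` gives a chain for `(a, b)`; this is the north-west corner rule.
-/

open Function

section

variable {I : Type*}

lemma Set.Finite.exists_isLeast [LinearOrder I] {s : Set I} (hs : s.Finite) (hne : s.Nonempty) :
    ∃ i, IsLeast s i := by
  obtain ⟨i, hi⟩ := hs.exists_minimal hne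
  exact ⟨i, minimal_iff_isLeast.mp hi⟩

lemma support_tsub_subset {a c : I → ℕ} : support (a - c) ⊆ support a :=
  fun k hk h => hk (by simp [h])

variable [DecidableEq I]

lemma Pi.single_one_add_tsub_single_one {a : I → ℕ} {i : I} (hi : a i ≠ 0) :
    Pi.single i 1 + (a - Pi.single i 1) = a := by
  refine add_tsub_cancel_of_le fun k => ?_
  rcases eq_or_ne k i with rfl | hk
  · simpa [Nat.one_le_iff_ne_zero] using hi
  · simp [hk]

lemma sum_tsub_single_one [Fintype I] {a : I → ℕ} {i : I} (hi : a i ≠ 0) :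
    ∑ k, (a - Pi.single i 1 : I → ℕ) k = ∑ k, a k - 1 := by
  conv_rhs => rw [← Pi.single_one_add_tsub_single_one hi]
  simp [Finset.sum_add_distrib]

def unitPair (p : I × I) : (I → ℕ) × (I → ℕ) :=
  (Pi.single p.1 1, Pi.single p.2 1)

variable [Fintype I] [LinearOrder I]

theorem exists_isChain_subset_support_prod_mem_closure (a b : I → ℕ)
    (hab : ∑ i, a i = ∑ i, b i) :
    ∃ σ ⊆ support a ×ˢ support b, IsChain (· ≤ ·) σ ∧
      (a, b) ∈ AddSubmonoid.closure (unitPair '' σ) := by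
  induction hn : ∑ i, a i generalizing a b with
  | zero =>
    have ha : a = 0 := funext <| by simpa [Finset.sum_eq_zero_iff] using hn
    have hb : b = 0 := funext <| by simpa [Finset.sum_eq_zero_iff] using hab.symm.trans hn
    exact ⟨∅, Set.empty_subset _, Set.subsingleton_empty.isChain, by simp [ha, hb]⟩
  | succ n ih =>
    have support_nonempty {c : I → ℕ} (hc : ∑ k, c k = n + 1) : (support c).Nonempty :=
      let ⟨k, _, hk⟩ := Finset.exists_ne_zero_of_sum_ne_zero (hc.trans_ne n.succ_ne_zero)
      ⟨k, hk⟩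
    obtain ⟨i, hai, hi⟩ := (Set.toFinite _).exists_isLeast (support_nonempty hn)
    obtain ⟨j, hbj, hj⟩ := (Set.toFinite _).exists_isLeast (support_nonempty (hab.symm.trans hn))
    obtain ⟨σ, hσ, hchain, hmem⟩ := ih (a - Pi.single i 1) (b - Pi.single j 1)
      (by rw [sum_tsub_single_one hai, sum_tsub_single_one hbj, hab])
      (by rw [sum_tsub_single_one hai, hn, Nat.add_sub_cancel])
    have hσ_le : ∀ p ∈ σ, (i, j) ≤ p := fun p hp =>
      ⟨hi (support_tsub_subset (hσ hp).1), hj (support_tsub_subset (hσ hp).2)⟩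
    refine ⟨insert (i, j) σ, ?_, hchain.insert fun p hp _ => Or.inl (hσ_le p hp), ?_⟩
    · exact Set.insert_subset ⟨hai, hbj⟩
        (hσ.trans (Set.prod_mono support_tsub_subset support_tsub_subset))
    · rw [← Pi.single_one_add_tsub_single_one hai, ← Pi.single_one_add_tsub_single_one hbj,
        ← Prod.mk_add_mk]
      exact add_mem (AddSubmonoid.subset_closure (Set.mem_image_of_mem _ (Set.mem_insert _ _)))
        (AddSubmonoid.closure_mono (Set.image_mono (Set.subset_insert _ _)) hmem)

end

/-- for a finite (totally ordered) set `I` and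
`N = {(a,b) ∈ ℕ^I × ℕ^I : ∑ aᵢ = ∑ bᵢ}`, every element of `N` lies in the submonoid
generated by `{(e_i, e_j) : (i,j) ∈ σ}` for some subset `σ ⊆ I × I` that is totally
ordered for the product order. -/
theorem totally_ordered_cones_cover
    (I : Type*) [Fintype I] [LinearOrder I] [DecidableEq I]
    (a b : I → ℕ) (hab : ∑ i, a i = ∑ i, b i) :
    ∃ σ : Set (I × I),
      (∀ p ∈ σ, ∀ q ∈ σ, p ≤ q ∨ q ≤ p) ∧
      (a, b) ∈ AddSubmonoid.closure
        ((fun p : I × I => ((Pi.single p.1 1 : I → ℕ), (Pi.single p.2 1 : I → ℕ))) '' σ) := by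
  obtain ⟨σ, -, hchain, hmem⟩ := exists_isChain_subset_support_prod_mem_closure a b hab
  exact ⟨σ, fun p hp q hq => hchain.total hp hq, hmem⟩
end

section
/- Let I be a finite totally ordered set and N = {(a, b) ∈ ℕ^I × ℕ^I : ∑ a_i = ∑ b_i}. For each totally ordered subset σ ⊆ I × I (with the product order), the submonoid N_σ ⊆ N generated by {(e_i, e_j) : (i, j) ∈ σ} is a free commutative monoid on the generators (e_i, e_j), (i, j) ∈ σ; i.e., N_σ ≅ ℕ^{|σ|}. -/
/-!
For a chain `σ` in `I × I` and any `p`, the elements of `σ` below `p` are either exactly those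
whose first coordinate is `≤ p.1`, or exactly those whose second coordinate is `≤ p.2`. So for a
combination `f` supported on `σ`, the cumulative sum `∑_{q ≤ p} f q` is a partial sum of the row
marginals or of the column marginals of `f`, i.e. of one of the two components of
`∑ f q • (e_{q.1}, e_{q.2})`. Cumulative sums over a finite poset determine the function, by
well-founded induction on `p`.
-/

open Finset

theorem Finset.sum_filter_congr_of_ne_zero {ι M : Type*} [AddCommMonoid M] {s : Finset ι}
    {f : ι → M} {p q : ι → Prop} [DecidablePred p] [DecidablePred q]
    (h : ∀ x ∈ s, f x ≠ 0 → (p x ↔ q x)) :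
    ∑ x ∈ s with p x, f x = ∑ x ∈ s with q x, f x := by
  rw [sum_filter, sum_filter]
  refine sum_congr rfl fun x hx => ?_
  by_cases hfx : f x = 0
  · simp [hfx]
  · simp [h x hx hfx]

theorem Finset.sum_filter_le_eq_add_sum_filter_lt {α M : Type*} [PartialOrder α] [Fintype α]
    [DecidableLE α] [DecidableLT α] [AddCommMonoid M] (f : α → M) (p : α) :
    ∑ q with q ≤ p, f q = f p + ∑ q with q < p, f q := by
  classical
  have : univ.filter (· ≤ p) = insert p (univ.filter (· < p)) := by
    ext q; simp [le_iff_eq_or_lt]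
  rw [this, sum_insert (by simp)]

theorem eq_of_forall_sum_filter_le_eq {α M : Type*} [PartialOrder α] [Fintype α]
    [DecidableLE α] [AddCancelCommMonoid M] {f g : α → M}
    (h : ∀ p, ∑ q with q ≤ p, f q = ∑ q with q ≤ p, g q) :
    f = g := by
  classical
  funext p
  induction p using WellFoundedLT.induction with
  | _ p ih =>
    have hlt : ∑ q with q < p, f q = ∑ q with q < p, g q :=
      sum_congr rfl fun q hq => ih q (mem_filter.1 hq).2
    have hle := h p
    rwa [sum_filter_le_eq_add_sum_filter_lt, sum_filter_le_eq_add_sum_filter_lt, hlt,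
      add_left_inj] at hle

theorem sum_sum_smul_single_apply {ι κ : Type*} [Fintype ι] [DecidableEq κ] (π : ι → κ)
    (f : ι → ℕ) (t : Finset κ) :
    ∑ k ∈ t, (∑ q, f q • Pi.single (π q) 1 : κ → ℕ) k = ∑ q with π q ∈ t, f q := by
  simp only [Finset.sum_apply, Pi.smul_apply, Pi.single_apply, smul_eq_mul, mul_ite, mul_one,
    mul_zero]
  rw [sum_comm, sum_filter]
  exact sum_congr rfl fun q _ => sum_ite_eq' t (π q) fun _ => f q

theorem IsChain.prod_le_iff_fst_le_or_snd_le {α β : Type*} [Preorder α] [Preorder β]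
    {σ : Set (α × β)} (hσ : IsChain (· ≤ ·) σ) (p : α × β) :
    (∀ q ∈ σ, q ≤ p ↔ q.1 ≤ p.1) ∨ (∀ q ∈ σ, q ≤ p ↔ q.2 ≤ p.2) := by
  by_contra! hne
  obtain ⟨⟨a, ha, ha_iff⟩, ⟨b, hb, hb_iff⟩⟩ := hne
  have ha1 : a.1 ≤ p.1 ∧ ¬a.2 ≤ p.2 := by
    by_cases h : a.1 ≤ p.1 <;> simp_all [Prod.le_def]
  have hb2 : b.2 ≤ p.2 ∧ ¬b.1 ≤ p.1 := by
    by_cases h : b.2 ≤ p.2 <;> simp_all [Prod.le_def]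
  rcases hσ.total ha hb with hab | hba
  · exact ha1.2 (hab.2.trans hb2.1)
  · exact hb2.2 (hba.1.trans ha1.1)

section

variable {α β : Type*} [Fintype α] [Fintype β] [DecidableEq α] [DecidableEq β]

theorem sum_filter_fst_le_eq [Preorder α] [DecidableLE α] (f : α × β → ℕ) (i : α) :
    ∑ q with q.1 ≤ i, f q =
      ∑ j with j ≤ i, (∑ q, f q • ((Pi.single q.1 1 : α → ℕ), (Pi.single q.2 1 : β → ℕ))).1 j := by
  rw [Prod.fst_sum]
  simp only [Prod.smul_fst]
  rw [sum_sum_smul_single_apply]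
  simp

theorem sum_filter_snd_le_eq [Preorder β] [DecidableLE β] (f : α × β → ℕ) (i : β) :
    ∑ q with q.2 ≤ i, f q =
      ∑ j with j ≤ i, (∑ q, f q • ((Pi.single q.1 1 : α → ℕ), (Pi.single q.2 1 : β → ℕ))).2 j := by
  rw [Prod.snd_sum]
  simp only [Prod.smul_snd]
  rw [sum_sum_smul_single_apply]
  simp

theorem sum_filter_le_eq_of_sum_smul_single_eq [Preorder α] [Preorder β] [DecidableLE α]
    [DecidableLE β] {σ : Set (α × β)} (hσ : IsChain (· ≤ ·) σ) {f g : α × β → ℕ}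
    (hf : ∀ p, f p ≠ 0 → p ∈ σ) (hg : ∀ p, g p ≠ 0 → p ∈ σ)
    (h : ∑ p, f p • ((Pi.single p.1 1 : α → ℕ), (Pi.single p.2 1 : β → ℕ)) =
      ∑ p, g p • ((Pi.single p.1 1 : α → ℕ), (Pi.single p.2 1 : β → ℕ)))
    (p : α × β) :
    ∑ q with q ≤ p, f q = ∑ q with q ≤ p, g q := by
  rcases hσ.prod_le_iff_fst_le_or_snd_le p with hfst | hsnd
  · rw [sum_filter_congr_of_ne_zero fun q _ hq => hfst q (hf q hq),
      sum_filter_congr_of_ne_zero fun q _ hq => hfst q (hg q hq),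
      sum_filter_fst_le_eq, sum_filter_fst_le_eq, h]
  · rw [sum_filter_congr_of_ne_zero fun q _ hq => hsnd q (hf q hq),
      sum_filter_congr_of_ne_zero fun q _ hq => hsnd q (hg q hq),
      sum_filter_snd_le_eq, sum_filter_snd_le_eq, h]

end

/-- for each totally ordered subset `σ ⊆ I × I` (product order), the
submonoid `N_σ` generated by `{(e_i, e_j) : (i,j) ∈ σ}` is free on these generators:
representations as `ℕ`-linear combinations of the generators are unique. -/
theorem totally_ordered_cone_free
    (I : Type*) [Fintype I] [LinearOrder I] [DecidableEq I]
    (σ : Set (I × I)) (hσ : ∀ p ∈ σ, ∀ q ∈ σ, p ≤ q ∨ q ≤ p)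
    (f g : I × I → ℕ)
    (hf : ∀ p, f p ≠ 0 → p ∈ σ) (hg : ∀ p, g p ≠ 0 → p ∈ σ)
    (h : ∑ p : I × I, f p •
          ((Pi.single p.1 1 : I → ℕ), (Pi.single p.2 1 : I → ℕ)) =
        ∑ p : I × I, g p •
          ((Pi.single p.1 1 : I → ℕ), (Pi.single p.2 1 : I → ℕ))) :
    f = g := by
  have hchain : IsChain (· ≤ ·) σ := fun p hp q hq _ => hσ p hp q hq
  exact eq_of_forall_sum_filter_le_eq (sum_filter_le_eq_of_sum_smul_single_eq hchain hf hg h)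
end

section
/- Let m_1,…,m_q ≥ 1 and N = {(a, b) ∈ ℕ^r × ℕ^q : a_1 + ⋯ + a_r = m_1 b_1 + ⋯ + m_q b_q}. Identify (a, j) ∈ V = {(a,j) : |a| = m_j} with f_{a,j} = (a, f_j) ∈ N, where f_j is the j-th standard basis vector of ℕ^q. Then for every (a, b) ∈ N there is a minimum totally ordered subset σ ⊆ V (for the order (a,j) ≤ (a',j') iff max Supp(a) ≤ min Supp(a') and j ≤ j') such that (a, b) lies in the submonoid of N generated by {f_{a,j} : (a, j) ∈ σ}. -/
/-!
Greedy decomposition: take the smallest `j` with `b j ≠ 0` and the first `m j` units of `a`,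
counted in increasing order of the coordinates. This vertex `(a', j)` is split off, and the rest
`(a - a', b - f_j)` again lies in `N`. By induction the rest is generated by a chain whose vertices
only use coordinates of `a - a'` and indices `j'` with `b j' ≠ 0`; the new vertex lies below
all of them, so adding it keeps the chain totally ordered.
-/

/-- The order on `V = {(a,j) : |a| = m_j}` used in the subdivision:
`(a,j) ≤ (a',j')` iff `max Supp(a) ≤ min Supp(a')` and `j ≤ j'`. -/
def suppLE {r q : ℕ} (p p' : (Fin r → ℕ) × Fin q) : Prop :=
  (∀ i, p.1 i ≠ 0 → ∀ i', p'.1 i' ≠ 0 → i ≤ i') ∧ p.2 ≤ p'.2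

open Finset

theorem exists_initial_part_of_le_sum {ι : Type*} [Fintype ι] [LinearOrder ι] (a : ι → ℕ) :
    ∀ M ≤ ∑ i, a i, ∃ a' ≤ a, ∑ i, a' i = M ∧ ∀ i i', a' i ≠ 0 → a' i' < a i' → i ≤ i'
  | 0, _ => ⟨0, fun _ => Nat.zero_le _, by simp, by simp⟩
  | M + 1, hM => by
    obtain ⟨a', hle, hsum, hinit⟩ := exists_initial_part_of_le_sum a M (by omega)
    have hrest : {i | a' i < a i}.Nonempty := by
      by_contra! h
      obtain rfl : a = a' := le_antisymm (fun i => not_lt.mp fun hi => h.subset hi) hle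
      omega
    obtain ⟨i₀, hi₀, hmin⟩ := wellFounded_lt.has_min _ hrest
    have hlt : ∀ i, (a' + Pi.single i₀ 1 : ι → ℕ) i < a i → a' i < a i := fun i h =>
      lt_of_le_of_lt le_self_add h
    refine ⟨a' + Pi.single i₀ 1, fun i => ?_, ?_, fun i i' hi hi' => ?_⟩
    · rcases eq_or_ne i i₀ with rfl | h
      · simpa using hi₀
      · simpa [h] using hle i
    · simp [sum_add_distrib, hsum]
    · rcases eq_or_ne i i₀ with rfl | h
      · exact not_lt.mp (hmin i' (hlt i' hi'))
      · exact hinit i i' (by simpa [h] using hi) (hlt i' hi')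

section

variable {r q : ℕ}

/-- The point `f_{a,j} = (a, f_j)` of `N` attached to the vertex `(a, j)`. -/
def latticeVector (p : (Fin r → ℕ) × Fin q) : (Fin r → ℕ) × (Fin q → ℕ) :=
  (p.1, Pi.single p.2 1)

theorem suppLE_of_initial {a a' : Fin r → ℕ} {j : Fin q} {p : (Fin r → ℕ) × Fin q}
    (hinit : ∀ i i', a' i ≠ 0 → a' i' < a i' → i ≤ i') (hp : p.1 ≤ a - a') (hj : j ≤ p.2) :
    suppLE (a', j) p :=
  ⟨fun i hi i' hi' => hinit i i' hi (by have := hp i'; simp only [Pi.sub_apply] at this; omega),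
    hj⟩

theorem exists_chain_closure_of_sum_eq (m : Fin q → ℕ) (b : Fin q → ℕ) :
    ∀ a : Fin r → ℕ, ∑ i, a i = ∑ j, m j * b j →
    ∃ σ : Set ((Fin r → ℕ) × Fin q), (∀ p ∈ σ, ∑ i, p.1 i = m p.2) ∧ IsChain suppLE σ ∧
      (∀ p ∈ σ, p.1 ≤ a ∧ b p.2 ≠ 0) ∧ (a, b) ∈ AddSubmonoid.closure (latticeVector '' σ) := by
  induction b using WellFoundedLT.induction with | _ b ih
  intro a hab
  rcases eq_or_ne b 0 with rfl | hb
  · obtain rfl : a = 0 := funext <| by simpa [Finset.sum_eq_zero_iff] using hab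
    exact ⟨∅, by simp, .empty, by simp, zero_mem _⟩
  obtain ⟨j₁, hj₁, hmin⟩ := wellFounded_lt.has_min {j | b j ≠ 0} (Function.ne_iff.mp hb)
  set b' := b - Pi.single j₁ 1
  have hb : b = b' + Pi.single j₁ 1 := by
    refine (tsub_add_cancel_of_le fun j => ?_).symm
    rcases eq_or_ne j j₁ with rfl | h
    · simpa [Nat.one_le_iff_ne_zero] using hj₁
    · simp [h]
  have hdeg : ∑ j, m j * b j = ∑ j, m j * b' j + m j₁ := by
    conv_lhs => rw [hb]
    simp [mul_add, sum_add_distrib, Pi.single_apply]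
  obtain ⟨a', ha'le, ha'sum, hinit⟩ := exists_initial_part_of_le_sum a (m j₁) (by omega)
  have ha : ∑ i, (a - a') i = ∑ j, m j * b' j := by
    rw [Pi.sub_def, sum_tsub_distrib _ fun i _ => ha'le i]; omega
  obtain ⟨σ, hσsum, hσchain, hσle, hσmem⟩ := ih b'
    (lt_of_le_of_ne tsub_le_self fun h => hj₁ (by simpa [← h] using congr_fun hb j₁)) (a - a') ha
  refine ⟨insert (a', j₁) σ, ?_, ?_, ?_, ?_⟩
  · rintro p (rfl | hp)
    exacts [ha'sum, hσsum p hp]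
  · refine hσchain.insert fun p hp _ => Or.inl (suppLE_of_initial hinit (hσle p hp).1 ?_)
    exact not_lt.mp (hmin p.2 fun h => (hσle p hp).2 (by simp [b', h]))
  · rintro p (rfl | hp)
    · exact ⟨ha'le, hj₁⟩
    · exact ⟨(hσle p hp).1.trans tsub_le_self, fun h => (hσle p hp).2 (by simp [b', h])⟩
  · have hsplit : (a, b) = latticeVector (a', j₁) + (a - a', b') := by
      rw [latticeVector, Prod.mk_add_mk, add_tsub_cancel_of_le ha'le, hb, add_comm]
    rw [hsplit]
    exact add_mem (AddSubmonoid.subset_closure (Set.mem_image_of_mem _ (Set.mem_insert _ _)))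
      (AddSubmonoid.closure_mono (Set.image_mono (Set.subset_insert _ _)) hσmem)

end

theorem totally_ordered_subdivision_covers_general
    (r q : ℕ) (m : Fin q → ℕ)
    (a : Fin r → ℕ) (b : Fin q → ℕ) (hab : ∑ i, a i = ∑ j, m j * b j) :
    ∃ σ : Set ((Fin r → ℕ) × Fin q),
      (∀ p ∈ σ, ∑ i, p.1 i = m p.2) ∧
      (∀ p ∈ σ, ∀ p' ∈ σ, p ≠ p' → suppLE p p' ∨ suppLE p' p) ∧
      (a, b) ∈ AddSubmonoid.closure
        ((fun p : (Fin r → ℕ) × Fin q =>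
          (p.1, (Pi.single p.2 1 : Fin q → ℕ))) '' σ) := by
  obtain ⟨σ, hσsum, hσchain, -, hσmem⟩ := exists_chain_closure_of_sum_eq m b a hab
  exact ⟨σ, hσsum, hσchain, hσmem⟩

/-- for `N = {(a,b) ∈ ℕ^r × ℕ^q : ∑ aᵢ = ∑ m_j b_j}` (all `m_j ≥ 1`),
every `(a,b) ∈ N` lies in the submonoid generated by `{(a',f_j) : (a',j) ∈ σ}` for
some totally ordered subset `σ ⊆ V = {(a',j) : ∑ a'ᵢ = m_j}`: the cones `N_σ`
cover `N`. -/
theorem totally_ordered_subdivision_covers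
    (r q : ℕ) (hr : 1 ≤ r) (hq : 1 ≤ q) (m : Fin q → ℕ) (hm : ∀ j, 1 ≤ m j)
    (a : Fin r → ℕ) (b : Fin q → ℕ) (hab : ∑ i, a i = ∑ j, m j * b j) :
    ∃ σ : Set ((Fin r → ℕ) × Fin q),
      (∀ p ∈ σ, ∑ i, p.1 i = m p.2) ∧
      (∀ p ∈ σ, ∀ p' ∈ σ, p ≠ p' → suppLE p p' ∨ suppLE p' p) ∧
      (a, b) ∈ AddSubmonoid.closure
        ((fun p : (Fin r → ℕ) × Fin q =>
          (p.1, (Pi.single p.2 1 : Fin q → ℕ))) '' σ) :=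
  totally_ordered_subdivision_covers_general r q m a b hab
end

section
/- Let n_1,…,n_k ∈ ℕ and let P be the amalgamated sum (pushout) of monoids (ℕ^k × ℤ) +_ℕ (ℕ^k × ℤ) along the maps ℕ → ℕ^k × ℤ sending 1 to ((n_i)_i, 1) on both sides. Then the dual monoid Hom(P, ℕ) is isomorphic to {(a, b) ∈ ℕ^k × ℕ^k : ∑_i n_i a_i = ∑_i n_i b_i}. -/
/-! A homomorphism `ℕ^k × ℤ → ℕ` kills the group factor `ℤ`, since `ℕ` has no nontrivial additive
units, so it is the linear form `x ↦ ∑ aᵢ xᵢ` given by its values `aᵢ` on the standard generators.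
By the universal property of the pushout, a homomorphism `P → ℕ` is a pair of such forms `a, b`
agreeing on `((nᵢ), 1)`, which is the condition `∑ nᵢ aᵢ = ∑ nᵢ bᵢ`. -/

namespace AddMonoidHom

variable {M G N : Type*}

theorem eq_zero_of_subsingleton_addUnits [AddGroup G] [AddMonoid N] [Subsingleton (AddUnits N)]
    (f : G →+ N) : f = 0 := by
  ext g
  simpa using congrArg AddUnits.val (Subsingleton.elim (f.toHomAddUnits g) 0)

theorem map_mk_eq_map_mk_zero [AddMonoid M] [AddGroup G] [AddCommMonoid N]
    [Subsingleton (AddUnits N)] (f : M × G →+ N) (x : M) (g : G) : f (x, g) = f (x, 0) := by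
  have hG : f.comp (inr M G) = 0 := eq_zero_of_subsingleton_addUnits _
  calc f (x, g) = f (x, 0) + f.comp (inr M G) g := by simp [← map_add]
    _ = f (x, 0) := by simp [hG]

variable (M G N) in
def prodAddGroupEquiv [AddMonoid M] [AddGroup G] [AddCommMonoid N] [Subsingleton (AddUnits N)] :
    (M × G →+ N) ≃ (M →+ N) where
  toFun f := f.comp (inl M G)
  invFun f := f.comp (fst M G)
  left_inv f := by ext ⟨x, g⟩; simp [map_mk_eq_map_mk_zero f x g]
  right_inv f := by ext; simp

end AddMonoidHom

section NatDual

variable (ι : Type*) [Fintype ι]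

noncomputable def natDualPiEquiv : ((ι → ℕ) →+ ℕ) ≃ (ι → ℕ) :=
  (addMonoidHomLequivNat ℕ).toEquiv.trans (Module.piEquiv ι ℕ ℕ).symm.toEquiv

variable {ι}

@[simp]
theorem natDualPiEquiv_apply [DecidableEq ι] (f : (ι → ℕ) →+ ℕ) (i : ι) :
    natDualPiEquiv ι f i = f (Pi.single i 1) := by
  simp [natDualPiEquiv, Module.piEquiv]

@[simp]
theorem natDualPiEquiv_symm_apply (a x : ι → ℕ) :
    (natDualPiEquiv ι).symm a x = ∑ i, x i * a i := by
  simp [natDualPiEquiv, Module.piEquiv_apply_apply]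

theorem AddMonoidHom.apply_eq_sum_mul_apply_single [DecidableEq ι] (f : (ι → ℕ) →+ ℕ)
    (x : ι → ℕ) :
    f x = ∑ i, x i * f (Pi.single i 1) := by
  have h := DFunLike.congr_fun ((natDualPiEquiv ι).symm_apply_apply f) x
  simp only [natDualPiEquiv_symm_apply, natDualPiEquiv_apply] at h
  exact h.symm

end NatDual

/-- for `P = (ℕ^k × ℤ) +_ℕ (ℕ^k × ℤ)` the pushout along
`1 ↦ ((nᵢ), 1)` on both sides, the dual monoid `Hom(P, ℕ)` — i.e., by the universal
property of the pushout, the set of pairs of homomorphisms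
`φ, ψ : ℕ^k × ℤ →+ ℕ` agreeing on `((nᵢ), 1)` — is isomorphic to
`{(a,b) ∈ ℕ^k × ℕ^k : ∑ nᵢ aᵢ = ∑ nᵢ bᵢ}`, via values on the standard generators. -/
theorem dual_of_amalgamated_sum_general (k : ℕ) (n : Fin k → ℕ) :
    ∃ F : {p : (((Fin k → ℕ) × ℤ) →+ ℕ) × (((Fin k → ℕ) × ℤ) →+ ℕ) //
            p.1 (n, 1) = p.2 (n, 1)} ≃
          {ab : (Fin k → ℕ) × (Fin k → ℕ) //
            ∑ i, n i * ab.1 i = ∑ i, n i * ab.2 i},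
      ∀ p, (F p).val =
        (fun i => p.val.1 ((Pi.single i 1 : Fin k → ℕ), 0),
         fun i => p.val.2 ((Pi.single i 1 : Fin k → ℕ), 0)) := by
  let e := (AddMonoidHom.prodAddGroupEquiv (Fin k → ℕ) ℤ ℕ).trans (natDualPiEquiv (Fin k))
  have he (φ : (Fin k → ℕ) × ℤ →+ ℕ) : e φ = fun i => φ (Pi.single i 1, 0) := by
    funext i
    simp [e, AddMonoidHom.prodAddGroupEquiv]
  have hval (φ : (Fin k → ℕ) × ℤ →+ ℕ) : φ (n, 1) = ∑ i, n i * e φ i := by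
    rw [he, AddMonoidHom.map_mk_eq_map_mk_zero]
    exact (φ.comp (AddMonoidHom.inl _ _)).apply_eq_sum_mul_apply_single n
  exact ⟨(e.prodCongr e).subtypeEquiv fun p => by rw [hval, hval]; rfl,
    fun p => by simp only [Equiv.subtypeEquiv_apply, Equiv.prodCongr_apply, Prod.map, he]⟩
end

section
/- Let d_1,…,d_n ≥ 1 and let P be the amalgamated sum ℕ^2 +_ℕ ℕ^n along the maps ℕ → ℕ^2, 1 ↦ (1,1), and ℕ → ℕ^n, 1 ↦ (d_1,…,d_n). Then the dual monoid Hom(P, ℕ) is isomorphic to {(a, b) ∈ ℕ^2 × ℕ^n : a_1 + a_2 = d_1 b_1 + ⋯ + d_n b_n}. -/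
/-- Evaluation hom: `x ↦ ∑ i, x i * a i`. -/
def evalHom {m : ℕ} (a : Fin m → ℕ) : (Fin m → ℕ) →+ ℕ where
  toFun x := ∑ i, x i * a i
  map_zero' := by simp
  map_add' x y := by simp [add_mul, Finset.sum_add_distrib]

lemma hom_eq_sum {m : ℕ} (φ : (Fin m → ℕ) →+ ℕ) (x : Fin m → ℕ) :
    φ x = ∑ i, x i * φ (Pi.single i 1) := by
  have hx : x = ∑ i, x i • (Pi.single i 1 : Fin m → ℕ) := by
    funext j
    simp [Finset.sum_apply, Pi.single_apply]
  conv_lhs => rw [hx]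
  rw [map_sum]
  simp only [map_nsmul, smul_eq_mul]

/-- for `P = ℕ² +_ℕ ℕⁿ` the pushout along `1 ↦ (1,1)` and
`1 ↦ (d₁,…,dₙ)`, the dual monoid `Hom(P, ℕ)` — i.e., by the universal property of
the pushout, pairs `(φ, ψ)` with `φ : ℕ² →+ ℕ`, `ψ : ℕⁿ →+ ℕ` and `φ(1,1) = ψ(d)` —
is isomorphic to `{(a,b) ∈ ℕ² × ℕⁿ : a₁ + a₂ = ∑ dᵢ bᵢ}`, via values on the standard
bases. -/
theorem dual_of_amalgamated_sum_curve (n : ℕ) (d : Fin n → ℕ) (hd : ∀ i, 1 ≤ d i) :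
    ∃ F : {p : ((Fin 2 → ℕ) →+ ℕ) × ((Fin n → ℕ) →+ ℕ) //
            p.1 (fun _ => 1) = p.2 d} ≃
          {ab : (Fin 2 → ℕ) × (Fin n → ℕ) //
            ab.1 0 + ab.1 1 = ∑ i, d i * ab.2 i},
      ∀ p, (F p).val =
        (fun i => p.val.1 (Pi.single i 1 : Fin 2 → ℕ),
         fun j => p.val.2 (Pi.single j 1 : Fin n → ℕ)) := by
  refine ⟨{
    toFun := fun p => ⟨(fun i => p.val.1 (Pi.single i 1), fun j => p.val.2 (Pi.single j 1)), ?_⟩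
    invFun := fun ab => ⟨(evalHom ab.val.1, evalHom ab.val.2), ?_⟩
    left_inv := ?_
    right_inv := ?_ }, fun p => rfl⟩
  · obtain ⟨⟨φ, ψ⟩, h⟩ := p
    have h1 : φ (fun _ => 1) = ∑ i, (1 : ℕ) * φ (Pi.single i 1) := hom_eq_sum φ _
    have h2 : ψ d = ∑ i, d i * ψ (Pi.single i 1) := hom_eq_sum ψ _
    simp only at h1 h2 ⊢
    rw [← h2, ← h]
    rw [h1, Fin.sum_univ_two, one_mul, one_mul]
  · obtain ⟨⟨a, b⟩, h⟩ := ab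
    simp only [evalHom, AddMonoidHom.coe_mk, ZeroHom.coe_mk]
    simpa [Fin.sum_univ_two, mul_comm] using h
  · rintro ⟨⟨φ, ψ⟩, h⟩
    refine Subtype.ext (Prod.ext ?_ ?_)
    · exact AddMonoidHom.ext fun x => (hom_eq_sum φ x).symm
    · exact AddMonoidHom.ext fun x => (hom_eq_sum ψ x).symm
  · rintro ⟨⟨a, b⟩, h⟩
    ext i
    · fin_cases i <;> simp [evalHom, Fin.sum_univ_two, Pi.single_apply]
    · simp [evalHom, Pi.single_apply]
end

section
/- Let r, q ≥ 1, m_1,…,m_q ≥ 0, and let P be the amalgamated sum ℕ^r +_ℕ ℕ^q along 1 ↦ (1,…,1) ∈ ℕ^r and 1 ↦ (m_1,…,m_q) ∈ ℕ^q. Then the dual monoid Hom(P, ℕ) is isomorphic to {(a, b) ∈ ℕ^r × ℕ^q : a_1 + ⋯ + a_r = m_1 b_1 + ⋯ + m_q b_q}. -/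
private lemma hom_eval (n : ℕ) (φ : (Fin n → ℕ) →+ ℕ) (v : Fin n → ℕ) :
    φ v = ∑ i, v i * φ (Pi.single i 1) := by
  conv_lhs => rw [← Finset.univ_sum_single v]
  rw [map_sum]
  refine Finset.sum_congr rfl fun i _ => ?_
  have : Pi.single i (v i) = v i • (Pi.single i 1 : Fin n → ℕ) := by
    funext x
    simp [Pi.single_apply, mul_ite]
  rw [this, map_nsmul, smul_eq_mul]

private def mkHom (n : ℕ) (a : Fin n → ℕ) : (Fin n → ℕ) →+ ℕ where
  toFun v := ∑ i, v i * a i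
  map_zero' := by simp
  map_add' x y := by
    simp [add_mul, Finset.sum_add_distrib]

/-- for `P = ℕ^r +_ℕ ℕ^q` the pushout along `1 ↦ (1,…,1)` and
`1 ↦ (m₁,…,m_q)`, the dual monoid `Hom(P, ℕ)` — i.e., by the universal property
of the pushout, pairs `(φ, ψ)` with `φ : ℕ^r →+ ℕ`, `ψ : ℕ^q →+ ℕ` and
`φ(1,…,1) = ψ(m)` — is isomorphic to
`{(a,b) ∈ ℕ^r × ℕ^q : ∑ aᵢ = ∑ m_j b_j}`, via values on the standard bases. -/
theorem dual_of_amalgamated_sum_semistable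
    (r q : ℕ) (hr : 1 ≤ r) (hq : 1 ≤ q) (m : Fin q → ℕ) :
    ∃ F : {p : ((Fin r → ℕ) →+ ℕ) × ((Fin q → ℕ) →+ ℕ) //
            p.1 (fun _ => 1) = p.2 m} ≃
          {ab : (Fin r → ℕ) × (Fin q → ℕ) //
            ∑ i, ab.1 i = ∑ j, m j * ab.2 j},
      ∀ p, (F p).val =
        (fun i => p.val.1 (Pi.single i 1 : Fin r → ℕ),
         fun j => p.val.2 (Pi.single j 1 : Fin q → ℕ)) := by
  refine ⟨⟨fun p => ⟨(fun i => p.val.1 (Pi.single i 1), fun j => p.val.2 (Pi.single j 1)), ?_⟩,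
    fun ab => ⟨(mkHom r ab.val.1, mkHom q ab.val.2), ?_⟩, ?_, ?_⟩, fun p => rfl⟩
  · have h1 := hom_eval r p.val.1 (fun _ => 1)
    have h2 := hom_eval q p.val.2 m
    simp only [one_mul] at h1
    rw [← h1, ← h2]
    exact p.2
  · have := ab.2
    simp only [mkHom, AddMonoidHom.coe_mk, ZeroHom.coe_mk]
    simpa [mul_comm] using this
  · rintro ⟨⟨φ, ψ⟩, h⟩
    refine Subtype.ext (Prod.ext (AddMonoidHom.ext fun v => ?_) (AddMonoidHom.ext fun v => ?_))
    · simp only [mkHom, AddMonoidHom.coe_mk, ZeroHom.coe_mk]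
      exact (hom_eval r φ v).symm
    · simp only [mkHom, AddMonoidHom.coe_mk, ZeroHom.coe_mk]
      exact (hom_eval q ψ v).symm
  · rintro ⟨⟨a, b⟩, h⟩
    refine Subtype.ext (Prod.ext (funext fun i => ?_) (funext fun j => ?_))
    · simp [mkHom, Pi.single_apply, ite_mul]
    · simp [mkHom, Pi.single_apply, ite_mul]
end

section
/- Let I be a finite set. For each i ∈ I let B_i ⊆ ℕ^I × ℕ^I be the three-element set of pairs ((a_k),(b_k)) with a_k = b_k = 0 for k ≠ i and (a_i, b_i) ∈ {(1,0), (0,1), (1,1)}, and let B = ⋃_i B_i. Let Σ = {σ ⊆ B : for all i, σ ∩ B_i is one of ∅, {(e_i,0)}, {(0,e_i)}, {(e_i,e_i)}, {(e_i,0),(e_i,e_i)}, {(0,e_i),(e_i,e_i)}}. Then every element of ℕ^I × ℕ^I lies in the submonoid generated by some σ ∈ Σ, and each such submonoid is free on σ. -/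
/-- The three generators `(e_i, 0), (0, e_i), (e_i, e_i)` of `B_i ⊆ ℕ^I × ℕ^I`,
indexed by `Fin 3`. -/
def logBlowUpGen {I : Type*} [DecidableEq I] (p : I × Fin 3) : (I → ℕ) × (I → ℕ) :=
  if p.2 = 0 then ((Pi.single p.1 1 : I → ℕ), 0)
  else if p.2 = 1 then (0, (Pi.single p.1 1 : I → ℕ))
  else ((Pi.single p.1 1 : I → ℕ), (Pi.single p.1 1 : I → ℕ))

/-- The admissible subsets `σ`: `σ ∩ B_i` is one of
`∅, {(e_i,0)}, {(0,e_i)}, {(e_i,e_i)}, {(e_i,0),(e_i,e_i)}, {(0,e_i),(e_i,e_i)}`,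
i.e. `σ` never contains both `(e_i,0)` and `(0,e_i)` (so `|σ ∩ B_i| ≤ 2`). -/
def logBlowUpAdmissible {I : Type*} (σ : Set (I × Fin 3)) : Prop :=
  ∀ i : I, ¬ ((i, 0) ∈ σ ∧ (i, 1) ∈ σ)

/-- The admissible subset adapted to a given `x`. -/
def logBlowUpSigma {I : Type*} (x : (I → ℕ) × (I → ℕ)) : Set (I × Fin 3) :=
  {p | (p.2 = 0 ∧ x.2 p.1 ≤ x.1 p.1) ∨ (p.2 = 1 ∧ x.1 p.1 < x.2 p.1) ∨ p.2 = 2}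

lemma logBlowUpSigma_mem0 {I : Type*} {x : (I → ℕ) × (I → ℕ)} {i : I}
    (h : x.2 i ≤ x.1 i) : (i, 0) ∈ logBlowUpSigma x := Or.inl ⟨rfl, h⟩

lemma logBlowUpSigma_mem1 {I : Type*} {x : (I → ℕ) × (I → ℕ)} {i : I}
    (h : x.1 i < x.2 i) : (i, 1) ∈ logBlowUpSigma x := Or.inr (Or.inl ⟨rfl, h⟩)

lemma logBlowUpSigma_mem2 {I : Type*} {x : (I → ℕ) × (I → ℕ)} (i : I) :
    (i, 2) ∈ logBlowUpSigma x := Or.inr (Or.inr rfl)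

lemma logBlowUpSigma_adm {I : Type*} (x : (I → ℕ) × (I → ℕ)) :
    logBlowUpAdmissible (logBlowUpSigma x) := by
  rintro i ⟨h0, h1⟩
  simp only [logBlowUpSigma, Set.mem_setOf_eq] at h0 h1
  rcases h0 with ⟨-, h0⟩ | ⟨h, -⟩ | h
  · rcases h1 with ⟨h, -⟩ | ⟨-, h1⟩ | h
    · exact absurd h (by decide)
    · omega
    · exact absurd h (by decide)
  · exact absurd h (by decide)
  · exact absurd h (by decide)

lemma logBlowUp_eval_sum1 {I : Type*} [Fintype I] [DecidableEq I] (f : I × Fin 3 → ℕ) (i : I) :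
    (∑ p : I × Fin 3, f p • logBlowUpGen p).1 i = f (i, 0) + f (i, 2) := by
  simp [Prod.fst_sum, Fintype.sum_prod_type, Fin.sum_univ_three, logBlowUpGen,
    Finset.sum_apply, Pi.single_apply, Finset.sum_ite_eq, mul_ite, Finset.sum_add_distrib]

lemma logBlowUp_eval_sum2 {I : Type*} [Fintype I] [DecidableEq I] (f : I × Fin 3 → ℕ) (i : I) :
    (∑ p : I × Fin 3, f p • logBlowUpGen p).2 i = f (i, 1) + f (i, 2) := by
  simp [Prod.snd_sum, Fintype.sum_prod_type, Fin.sum_univ_three, logBlowUpGen,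
    Finset.sum_apply, Pi.single_apply, Finset.sum_ite_eq, mul_ite, Finset.sum_add_distrib]

/-- every element of `ℕ^I × ℕ^I` lies in the submonoid generated by
some admissible `σ ∈ Σ`, and each such submonoid is free on its generators. -/
theorem logBlowUp_subdivision
    (I : Type*) [Fintype I] [DecidableEq I] :
    (∀ x : (I → ℕ) × (I → ℕ), ∃ σ : Set (I × Fin 3),
      logBlowUpAdmissible σ ∧
      x ∈ AddSubmonoid.closure (logBlowUpGen '' σ)) ∧
    (∀ σ : Set (I × Fin 3), logBlowUpAdmissible σ →
      ∀ f g : I × Fin 3 → ℕ,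
        (∀ p, f p ≠ 0 → p ∈ σ) → (∀ p, g p ≠ 0 → p ∈ σ) →
        ∑ p : I × Fin 3, f p • logBlowUpGen p =
          ∑ p : I × Fin 3, g p • logBlowUpGen p →
        f = g) := by
  constructor
  · intro x
    refine ⟨logBlowUpSigma x, logBlowUpSigma_adm x, ?_⟩
    have hx : x = ∑ i : I,
        ((x.1 i • Pi.single i 1, x.2 i • Pi.single i 1) : (I → ℕ) × (I → ℕ)) := by
      ext k <;> simp [Prod.fst_sum, Prod.snd_sum, Finset.sum_apply, Pi.single_apply,
        mul_ite, Finset.sum_ite_eq]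
    nth_rewrite 2 [hx]
    refine AddSubmonoid.sum_mem _ fun i _ => ?_
    by_cases h : x.2 i ≤ x.1 i
    · have heq : ((x.1 i • Pi.single i 1, x.2 i • Pi.single i 1) : (I → ℕ) × (I → ℕ)) =
          (x.1 i - x.2 i) • logBlowUpGen (i, 0) + x.2 i • logBlowUpGen (i, 2) := by
        have g0 : logBlowUpGen ((i, 0) : I × Fin 3) = ((Pi.single i 1 : I → ℕ), 0) := rfl
        have g2 : logBlowUpGen ((i, 2) : I × Fin 3) =
            ((Pi.single i 1 : I → ℕ), (Pi.single i 1 : I → ℕ)) := rfl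
        rw [g0, g2, Prod.smul_mk, Prod.smul_mk, Prod.mk_add_mk, smul_zero, zero_add,
          ← add_smul, Nat.sub_add_cancel h]
      rw [heq]
      exact add_mem
        (AddSubmonoid.nsmul_mem _ (AddSubmonoid.subset_closure
          (Set.mem_image_of_mem _ (logBlowUpSigma_mem0 h))) _)
        (AddSubmonoid.nsmul_mem _ (AddSubmonoid.subset_closure
          (Set.mem_image_of_mem _ (logBlowUpSigma_mem2 i))) _)
    · have heq : ((x.1 i • Pi.single i 1, x.2 i • Pi.single i 1) : (I → ℕ) × (I → ℕ)) =
          (x.2 i - x.1 i) • logBlowUpGen (i, 1) + x.1 i • logBlowUpGen (i, 2) := by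
        have g1 : logBlowUpGen ((i, 1) : I × Fin 3) = (0, (Pi.single i 1 : I → ℕ)) := rfl
        have g2 : logBlowUpGen ((i, 2) : I × Fin 3) =
            ((Pi.single i 1 : I → ℕ), (Pi.single i 1 : I → ℕ)) := rfl
        rw [g1, g2, Prod.smul_mk, Prod.smul_mk, Prod.mk_add_mk, smul_zero, zero_add,
          ← add_smul, Nat.sub_add_cancel (le_of_not_ge h)]
      rw [heq]
      exact add_mem
        (AddSubmonoid.nsmul_mem _ (AddSubmonoid.subset_closure
          (Set.mem_image_of_mem _ (logBlowUpSigma_mem1 (lt_of_not_ge h)))) _)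
        (AddSubmonoid.nsmul_mem _ (AddSubmonoid.subset_closure
          (Set.mem_image_of_mem _ (logBlowUpSigma_mem2 i))) _)
  · intro σ hadm f g hf hg hsum
    funext p
    obtain ⟨i, k⟩ := p
    have h1 : f (i, 0) + f (i, 2) = g (i, 0) + g (i, 2) := by
      rw [← logBlowUp_eval_sum1 f i, ← logBlowUp_eval_sum1 g i, hsum]
    have h2 : f (i, 1) + f (i, 2) = g (i, 1) + g (i, 2) := by
      rw [← logBlowUp_eval_sum2 f i, ← logBlowUp_eval_sum2 g i, hsum]
    have c1 : f (i, 0) = 0 ∨ f (i, 1) = 0 := by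
      by_contra hc; push_neg at hc
      exact hadm i ⟨hf _ hc.1, hf _ hc.2⟩
    have c2 : g (i, 0) = 0 ∨ g (i, 1) = 0 := by
      by_contra hc; push_neg at hc
      exact hadm i ⟨hg _ hc.1, hg _ hc.2⟩
    have c3 : f (i, 0) = 0 ∨ g (i, 1) = 0 := by
      by_contra hc; push_neg at hc
      exact hadm i ⟨hf _ hc.1, hg _ hc.2⟩
    have c4 : g (i, 0) = 0 ∨ f (i, 1) = 0 := by
      by_contra hc; push_neg at hc
      exact hadm i ⟨hg _ hc.1, hf _ hc.2⟩
    have e0 : f (i, 0) = g (i, 0) := by omega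
    have e1 : f (i, 1) = g (i, 1) := by omega
    have e2 : f (i, 2) = g (i, 2) := by omega
    fin_cases k <;> assumption
end

section
/- Let I be a finite set, P = ℕ^I × ℕ^I with dual N = ℕ^I × ℕ^I, and let Σ be the subdivision of N by totally ordered subsets σ ⊆ I × I (for a fixed total order on I and the product order on I × I), σ identified with {(e_i, e_j)}. If (a, b) ∈ N with ∑ a_i = ∑ b_i, then the greedy decomposition — repeatedly subtracting (e_i, e_j) for i minimal in Supp(a) and j minimal in Supp(b) the maximal number of times min(a_i, b_j) — terminates and expresses (a, b) as an ℕ-linear combination of elements (e_i, e_j) forming a totally ordered subset of I × I. -/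
/-- One pass of the greedy decomposition with a fuel parameter: at each step, subtract
`min (aᵢ, b_j) • (e_i, e_j)` where `i = min Supp a` and `j = min Supp b`, and record the
coefficient. -/
def greedyAux {I : Type*} [Fintype I] [LinearOrder I] :
    ℕ → ((I → ℕ) × (I → ℕ)) → (I × I) → ℕ
  | 0, _ => fun _ => 0
  | fuel + 1, x =>
    if h : (Finset.univ.filter fun i => x.1 i ≠ 0).Nonempty ∧
        (Finset.univ.filter fun j => x.2 j ≠ 0).Nonempty then
      let i := (Finset.univ.filter fun i => x.1 i ≠ 0).min' h.1
      let j := (Finset.univ.filter fun j => x.2 j ≠ 0).min' h.2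
      let c := min (x.1 i) (x.2 j)
      fun p =>
        greedyAux fuel (x.1 - c • Pi.single i 1, x.2 - c • Pi.single j 1) p +
          (if p = (i, j) then c else 0)
    else fun _ => 0

lemma greedy_key {I : Type*} [Fintype I] [LinearOrder I] :
    ∀ (fuel : ℕ) (a b : I → ℕ), ∑ i, a i = ∑ i, b i → ∑ i, a i ≤ fuel →
    (∀ p : I × I, greedyAux fuel (a, b) p ≠ 0 → a p.1 ≠ 0 ∧ b p.2 ≠ 0) ∧
    (∀ p q : I × I, greedyAux fuel (a, b) p ≠ 0 → greedyAux fuel (a, b) q ≠ 0 →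
      p ≤ q ∨ q ≤ p) ∧
    ∑ p : I × I, greedyAux fuel (a, b) p •
        ((Pi.single p.1 1 : I → ℕ), (Pi.single p.2 1 : I → ℕ)) = (a, b) := by
  intro fuel
  induction fuel with
  | zero =>
    intro a b hab hle
    have ha : ∀ i, a i = 0 := by
      intro i
      have := Finset.sum_eq_zero_iff.mp (Nat.le_zero.mp hle) i (Finset.mem_univ i)
      exact this
    have hb : ∀ i, b i = 0 := by
      intro i
      have h0 : ∑ i, b i = 0 := by omega
      exact Finset.sum_eq_zero_iff.mp h0 i (Finset.mem_univ i)
    refine ⟨fun p hp => absurd rfl hp, fun p q hp _ => absurd rfl hp, ?_⟩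
    simp only [greedyAux, zero_smul, Finset.sum_const_zero]
    exact Prod.ext (funext fun i => (ha i).symm) (funext fun i => (hb i).symm)
  | succ fuel ih =>
    intro a b hab hle
    rw [greedyAux]
    by_cases h : (Finset.univ.filter fun i => a i ≠ 0).Nonempty ∧
        (Finset.univ.filter fun j => b j ≠ 0).Nonempty
    · simp only [dif_pos h]
      set i := (Finset.univ.filter fun i => a i ≠ 0).min' h.1 with hi
      set j := (Finset.univ.filter fun j => b j ≠ 0).min' h.2 with hj
      set c := min (a i) (b j) with hc
      have hai : a i ≠ 0 := by
        have := Finset.min'_mem _ h.1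
        simpa using this
      have hbj : b j ≠ 0 := by
        have := Finset.min'_mem _ h.2
        simpa using this
      have hca : c ≤ a i := min_le_left _ _
      have hcb : c ≤ b j := min_le_right _ _
      have hc1 : 1 ≤ c := by omega
      set a' : I → ℕ := a - c • Pi.single i 1 with ha'
      set b' : I → ℕ := b - c • Pi.single j 1 with hb'
      have hale : c • Pi.single i 1 ≤ a := by
        intro k
        by_cases hk : k = i
        · subst hk; simpa using hca
        · simp [Pi.single_apply, hk]
      have hble : c • Pi.single j 1 ≤ b := by
        intro k
        by_cases hk : k = j
        · subst hk; simpa using hcb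
        · simp [Pi.single_apply, hk]
      have ha'a : a' + c • Pi.single i 1 = a := by
        funext k; exact Nat.sub_add_cancel (hale k)
      have hb'b : b' + c • Pi.single j 1 = b := by
        funext k; exact Nat.sub_add_cancel (hble k)
      have hsuma' : ∑ k, a' k = ∑ k, a k - c := by
        have : ∑ k, a' k + ∑ k, (c • Pi.single i 1 : I → ℕ) k = ∑ k, a k := by
          rw [← Finset.sum_add_distrib]
          exact Finset.sum_congr rfl fun k _ => congrFun ha'a k
        have hs : ∑ k, (c • Pi.single i 1 : I → ℕ) k = c := by
          simp [Pi.single_apply, Finset.sum_ite_eq']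
        omega
      have hsumb' : ∑ k, b' k = ∑ k, b k - c := by
        have : ∑ k, b' k + ∑ k, (c • Pi.single j 1 : I → ℕ) k = ∑ k, b k := by
          rw [← Finset.sum_add_distrib]
          exact Finset.sum_congr rfl fun k _ => congrFun hb'b k
        have hs : ∑ k, (c • Pi.single j 1 : I → ℕ) k = c := by
          simp [Pi.single_apply, Finset.sum_ite_eq']
        omega
      have hca' : c ≤ ∑ k, a k := le_trans hca (Finset.single_le_sum (fun k _ => Nat.zero_le _) (Finset.mem_univ i))
      have hab' : ∑ k, a' k = ∑ k, b' k := by rw [hsuma', hsumb', hab]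
      have hle' : ∑ k, a' k ≤ fuel := by rw [hsuma']; omega
      obtain ⟨IH1, IH2, IH3⟩ := ih a' b' hab' hle'
      have hmem : ∀ p : I × I,
          greedyAux fuel (a', b') p + (if p = (i, j) then c else 0) ≠ 0 →
          a p.1 ≠ 0 ∧ b p.2 ≠ 0 := by
        intro p hp
        by_cases hpij : p = (i, j)
        · subst hpij; exact ⟨hai, hbj⟩
        · simp only [if_neg hpij, add_zero] at hp
          obtain ⟨h1, h2⟩ := IH1 p hp
          constructor
          · intro h0
            apply h1
            have := hale p.1
            simp only [ha', Pi.sub_apply]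
            omega
          · intro h0
            apply h2
            have := hble p.2
            simp only [hb', Pi.sub_apply]
            omega
      refine ⟨hmem, ?_, ?_⟩
      · intro p q hp hq
        have hij_le : ∀ r : I × I,
            greedyAux fuel (a', b') r + (if r = (i, j) then c else 0) ≠ 0 →
            (i, j) ≤ r := by
          intro r hr
          obtain ⟨h1, h2⟩ := hmem r hr
          constructor
          · exact Finset.min'_le _ _ (by simpa using h1)
          · exact Finset.min'_le _ _ (by simpa using h2)
        by_cases hpij : p = (i, j)
        · left; subst hpij; exact hij_le q hq
        · by_cases hqij : q = (i, j)
          · right; subst hqij; exact hij_le p hp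
          · simp only [if_neg hpij, add_zero] at hp
            simp only [if_neg hqij, add_zero] at hq
            exact IH2 p q hp hq
      · have hsplit : ∑ p : I × I,
            (greedyAux fuel (a', b') p + (if p = (i, j) then c else 0)) •
              ((Pi.single p.1 1 : I → ℕ), (Pi.single p.2 1 : I → ℕ)) =
            (∑ p : I × I, greedyAux fuel (a', b') p •
              ((Pi.single p.1 1 : I → ℕ), (Pi.single p.2 1 : I → ℕ))) +
            c • ((Pi.single i 1 : I → ℕ), (Pi.single j 1 : I → ℕ)) := by
          simp only [add_smul, Finset.sum_add_distrib, ite_smul, zero_smul]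
          rw [Finset.sum_ite_eq' Finset.univ ((i, j) : I × I)
            (fun p => c • ((Pi.single p.1 1 : I → ℕ), (Pi.single p.2 1 : I → ℕ)))]
          simp
        rw [hsplit, IH3]
        refine Prod.ext ?_ ?_
        · simpa using ha'a
        · simpa using hb'b
    · simp only [dif_neg h]
      have hab0 : ∑ k, a k = 0 := by
        rcases not_and_or.mp h with h' | h'
        · rw [Finset.not_nonempty_iff_eq_empty, Finset.filter_eq_empty_iff] at h'
          apply Finset.sum_eq_zero
          intro k _
          simpa using h' (Finset.mem_univ k)
        · rw [Finset.not_nonempty_iff_eq_empty, Finset.filter_eq_empty_iff] at h'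
          rw [hab]
          apply Finset.sum_eq_zero
          intro k _
          simpa using h' (Finset.mem_univ k)
      have ha : ∀ k, a k = 0 := fun k =>
        Finset.sum_eq_zero_iff.mp hab0 k (Finset.mem_univ k)
      have hb : ∀ k, b k = 0 := fun k =>
        Finset.sum_eq_zero_iff.mp (hab ▸ hab0) k (Finset.mem_univ k)
      refine ⟨fun p hp => absurd rfl hp, fun p q hp _ => absurd rfl hp, ?_⟩
      simp only [zero_smul, Finset.sum_const_zero]
      exact (Prod.ext (funext fun k => (ha k).symm) (funext fun k => (hb k).symm))

/-- The greedy decomposition of `(a, b)`: the coefficient attached to each pair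
`(i, j) ∈ I × I`.  (`∑ aᵢ` steps always suffice, so the recursion terminates within the
given fuel.) -/
def greedy {I : Type*} [Fintype I] [LinearOrder I] (x : (I → ℕ) × (I → ℕ)) :
    (I × I) → ℕ :=
  greedyAux (∑ i, x.1 i + 1) x

/-- for `(a,b) ∈ N`, i.e. `∑ aᵢ = ∑ bᵢ`, the greedy decomposition
terminates and expresses `(a,b)` as an `ℕ`-linear combination of elements `(e_i, e_j)`
whose set of used pairs is totally ordered in the product order on `I × I`. -/
theorem greedy_decomposition
    (I : Type*) [Fintype I] [LinearOrder I]
    (a b : I → ℕ) (hab : ∑ i, a i = ∑ i, b i) :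
    (∀ p q : I × I, greedy (a, b) p ≠ 0 → greedy (a, b) q ≠ 0 → p ≤ q ∨ q ≤ p) ∧
    ∑ p : I × I, greedy (a, b) p •
        ((Pi.single p.1 1 : I → ℕ), (Pi.single p.2 1 : I → ℕ)) = (a, b) := by
  have h := greedy_key (∑ i, a i + 1) a b hab (Nat.le_succ _)
  exact ⟨h.2.1, h.2.2⟩
end
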